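/- arXiv:1105.2895 — 3 statements merged into one kernel-verified Lean document; each statement's English description precedes it below -/
import Mathlib

section
/- Let A and B be finite-dimensional semi-simple F-algebras, with B realized as a product of endomorphism algebras ∏_{j=1}^r End_{Δ_j}(V_j) where each Δ_j is a division F-algebra and V_j a finite right Δ_j-module, and A = ∏_{i=1}^s A_i a product of simple F-algebras. Then there exists an F-algebra homomorphism from A to B if and only if for each j there is a decomposition V_j = V_{j1} ⊕ ⋯ ⊕ V_{js} into Δ_j-subspaces such that each V_{ji} admits a right module structure over Δ_j ⊗_F A_i^op compatible with its Δ_j-structure. -/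
/-!
An algebra map `∏ᵢ Aᵢ → End_Δ(V)` is the same as a decomposition of `V` along the images
`eᵢ` of the unit vectors of `∏ᵢ Aᵢ`: these form a complete family of orthogonal idempotents,
so `V = ⨁ᵢ eᵢ V`, and `Aᵢ` acts unitally on the corner `eᵢ V` by `Δ`-linear maps.
Conversely, actions of the `Aᵢ` on the summands of a decomposition assemble to a
block-diagonal action of `∏ᵢ Aᵢ`.
-/

open LinearMap

theorem CompleteOrthogonalIdempotents.isInternal_range {R M ι : Type*} [Ring R] [AddCommGroup M]
    [Module R M] [Fintype ι] [DecidableEq ι] {e : ι → Module.End R M}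
    (he : CompleteOrthogonalIdempotents e) : DirectSum.IsInternal fun i ↦ range (e i) := by
  refine DirectSum.isInternal_submodule_of_iSupIndep_of_iSup_eq_top ?_ ?_
  · refine iSupIndep_def.mpr fun i ↦ Submodule.disjoint_def.mpr fun x hxi hx ↦ ?_
    have hker : (⨆ (k) (_ : k ≠ i), range (e k)) ≤ ker (e i) :=
      iSup₂_le fun k hki ↦ range_le_ker_iff.mpr (he.ortho (Ne.symm hki))
    rw [← (he.idem i).mem_range_iff.mp hxi]
    exact hker hx
  · refine eq_top_iff.mpr fun x _ ↦ ?_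
    have hx : ∑ i, e i x = x := by rw [← LinearMap.sum_apply, he.complete, Module.End.one_apply]
    rw [← hx]
    exact Submodule.sum_mem _ fun i _ ↦ Submodule.mem_iSup_of_mem i (mem_range_self _ _)

namespace NonUnitalAlgHom

variable {F A D M : Type*} [CommSemiring F] [Semiring A] [Algebra F A] [Semiring D]
  [AddCommMonoid M] [Module D M] [Module F M] [SMulCommClass D F M]

theorem apply_map_one_apply (f : A →ₙₐ[F] Module.End D M) (a : A) (x : M) :
    f 1 (f a x) = f a x := by
  rw [← Module.End.mul_apply, ← map_mul, one_mul]

theorem mapsTo_range_map_one (f : A →ₙₐ[F] Module.End D M) (a : A) :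
    ∀ x ∈ range (f 1), f a x ∈ range (f 1) := by
  rintro _ ⟨y, rfl⟩
  exact ⟨f a (f 1 y), f.apply_map_one_apply a _⟩

variable [Algebra F D] [IsScalarTower F D M]

def restrictRangeMapOne (f : A →ₙₐ[F] Module.End D M) :
    A →ₐ[F] Module.End D (range (f 1)) where
  toFun a := (f a).restrict (f.mapsTo_range_map_one a)
  map_one' := by
    ext ⟨_, y, rfl⟩
    exact f.apply_map_one_apply 1 y
  map_mul' a b := by
    ext
    simp only [coe_restrict_apply, Module.End.mul_apply, map_mul]
  map_zero' := by
    ext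
    simp
  map_add' a b := by
    ext
    simp only [coe_restrict_apply, map_add, LinearMap.add_apply, Submodule.coe_add]
  commutes' c := by
    ext ⟨_, y, rfl⟩
    simp only [coe_restrict_apply, Algebra.algebraMap_eq_smul_one, map_smul, LinearMap.smul_apply,
      Module.End.one_apply, Submodule.coe_smul_of_tower, f.apply_map_one_apply]

end NonUnitalAlgHom

def Pi.singleNonUnitalAlgHom (F : Type*) {ι : Type*} [CommSemiring F] [DecidableEq ι]
    (A : ι → Type*) [∀ i, Semiring (A i)] [∀ i, Algebra F (A i)] (i : ι) :
    A i →ₙₐ[F] ∀ i, A i where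
  toFun := Pi.single i
  map_smul' := Pi.single_smul i
  map_zero' := Pi.single_zero i
  map_add' := Pi.single_add i
  map_mul' := Pi.single_mul i

def Module.End.piAlgHom (S R : Type*) {ι : Type*} [CommSemiring S] [Semiring R]
    (M : ι → Type*) [∀ i, AddCommMonoid (M i)] [∀ i, Module R (M i)] [∀ i, Module S (M i)]
    [∀ i, SMulCommClass R S (M i)] [SMul S R] [∀ i, IsScalarTower S R (M i)] :
    (∀ i, Module.End R (M i)) →ₐ[S] Module.End R (∀ i, M i) where
  toFun := LinearMap.piMap
  map_one' := rfl
  map_mul' _ _ := rfl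
  map_zero' := rfl
  map_add' _ _ := rfl
  commutes' _ := rfl

noncomputable def DirectSum.IsInternal.endAlgHom (F : Type*) {D M ι : Type*} [CommSemiring F]
    [Semiring D] [Algebra F D] [AddCommMonoid M] [Module D M] [Module F M] [SMulCommClass D F M]
    [IsScalarTower F D M]
    [Fintype ι] [DecidableEq ι] {W : ι → Submodule D M} (h : DirectSum.IsInternal W) :
    (∀ i, Module.End D (W i)) →ₐ[F] Module.End D M :=
  (((LinearEquiv.ofBijective (DirectSum.coeLinearMap W) h).symm.trans
    (DirectSum.linearEquivFunOnFintype D ι fun i ↦ W i)).symm.conjAlgEquiv F).toAlgHom.comp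
    (Module.End.piAlgHom F D fun i ↦ W i)

theorem homExists_iff_decomposition_general
    (F : Type*) [Field F] (r s : ℕ)
    (Δ : Fin r → Type*) [∀ j, DivisionRing (Δ j)] [∀ j, Algebra F (Δ j)]
    (V : Fin r → Type*) [∀ j, AddCommGroup (V j)] [∀ j, Module (Δ j) (V j)]
    [∀ j, Module F (V j)] [∀ j, SMulCommClass (Δ j) F (V j)]
    [∀ j, IsScalarTower F (Δ j) (V j)]
    (A : Fin s → Type*) [∀ i, Ring (A i)] [∀ i, Algebra F (A i)] :
    Nonempty (((i : Fin s) → A i) →ₐ[F] ((j : Fin r) → Module.End (Δ j) (V j))) ↔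
      ∀ j : Fin r, ∃ W : Fin s → Submodule (Δ j) (V j),
        DirectSum.IsInternal W ∧
        ∀ i : Fin s, Nonempty (A i →ₐ[F] Module.End (Δ j) (W i)) := by
  constructor
  · rintro ⟨φ⟩ j
    let φj := (Pi.evalAlgHom F _ j).comp φ
    let f i := φj.toNonUnitalAlgHom.comp (Pi.singleNonUnitalAlgHom F A i)
    have he : CompleteOrthogonalIdempotents fun i ↦ f i 1 :=
      (CompleteOrthogonalIdempotents.single A).map φj.toRingHom
    exact ⟨fun i ↦ range (f i 1), he.isInternal_range,
      fun i ↦ ⟨(f i).restrictRangeMapOne⟩⟩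
  · intro hdec
    choose W hW ψ using hdec
    exact ⟨AlgHom.pi fun j ↦ ((hW j).endAlgHom F).comp
      (AlgHom.pi fun i ↦ (ψ j i).some.comp (Pi.evalAlgHom F A i))⟩

/-- **Existence of homomorphisms between semi-simple algebras via module decompositions.**
Let `B = ∏_{j=1}^r End_{Δ_j}(V_j)` (each `Δ_j` a finite-dimensional division `F`-algebra,
`V_j` a finite `Δ_j`-module) and `A = ∏_{i=1}^s A_i` a product of finite-dimensional simple
`F`-algebras.  There is an `F`-algebra homomorphism `A → B` iff for each `j` the module `V_j`
decomposes as an internal direct sum `V_j = V_{j1} ⊕ ⋯ ⊕ V_{js}` of `Δ_j`-submodules such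
that each `V_{ji}` carries a `Δ_j ⊗_F A_i^op`-module structure compatible with its
`Δ_j`-structure, i.e. an `A_i`-action by `Δ_j`-linear endomorphisms. -/
theorem homExists_iff_decomposition
    (F : Type*) [Field F] (r s : ℕ)
    (Δ : Fin r → Type*) [∀ j, DivisionRing (Δ j)] [∀ j, Algebra F (Δ j)]
    [∀ j, FiniteDimensional F (Δ j)]
    (V : Fin r → Type*) [∀ j, AddCommGroup (V j)] [∀ j, Module (Δ j) (V j)]
    [∀ j, Module F (V j)] [∀ j, SMulCommClass (Δ j) F (V j)]
    [∀ j, IsScalarTower F (Δ j) (V j)] [∀ j, FiniteDimensional F (V j)]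
    (A : Fin s → Type*) [∀ i, Ring (A i)] [∀ i, Algebra F (A i)]
    [∀ i, FiniteDimensional F (A i)] [∀ i, IsSimpleRing (A i)] :
    Nonempty (((i : Fin s) → A i) →ₐ[F] ((j : Fin r) → Module.End (Δ j) (V j))) ↔
      ∀ j : Fin r, ∃ W : Fin s → Submodule (Δ j) (V j),
        DirectSum.IsInternal W ∧
        ∀ i : Fin s, Nonempty (A i →ₐ[F] Module.End (Δ j) (W i)) :=
  homExists_iff_decomposition_general F r s Δ V A
end

section
/- Let A be a semi-simple F-algebra, B = End_Δ(V) a simple F-algebra with Δ a division F-algebra and V a finite right Δ-module, and let φ_1, φ_2 : A → B be F-algebra homomorphisms. Let W^(1), W^(2) denote V viewed as (A,Δ)-bimodules via φ_1 and φ_2 respectively. Then φ_2 = Int(b) ∘ φ_1 for some unit b ∈ B^× if and only if W^(1) and W^(2) are isomorphic as (A,Δ)-bimodules. -/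
/-- **Conjugacy of homomorphisms and bimodule isomorphism (Noether–Skolem style).**
Let `A` be a semi-simple `F`-algebra, `B = End_Δ(V)` a simple `F`-algebra (`Δ` a
finite-dimensional division `F`-algebra, `V` a nonzero finite `Δ`-module), and
`φ₁, φ₂ : A → B` two `F`-algebra homomorphisms.  Then `φ₂ = Int(b) ∘ φ₁` for some unit
`b ∈ B^×` iff `V` endowed with the `(A,Δ)`-bimodule structures via `φ₁` and `φ₂` are
isomorphic bimodules, i.e. there is a `Δ`-linear automorphism `g` of `V` intertwining
the two `A`-actions. -/
theorem conjugate_iff_bimodule_iso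
    (F : Type*) [Field F]
    (A : Type*) [Ring A] [Algebra F A] [FiniteDimensional F A] [IsSemisimpleRing A]
    (Δ : Type*) [DivisionRing Δ] [Algebra F Δ] [FiniteDimensional F Δ]
    (V : Type*) [AddCommGroup V] [Module Δ V]
    [Module F V] [SMulCommClass Δ F V] [IsScalarTower F Δ V] [FiniteDimensional F V]
    (φ₁ φ₂ : A →ₐ[F] Module.End Δ V) :
    (∃ b : (Module.End Δ V)ˣ, ∀ a : A, φ₂ a = b * φ₁ a * ↑b⁻¹) ↔
      ∃ g : V ≃ₗ[Δ] V, ∀ (a : A) (v : V), g (φ₁ a v) = φ₂ a (g v) := by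
  constructor
  · rintro ⟨b, hb⟩
    refine ⟨LinearEquiv.ofLinear (b : Module.End Δ V) (↑b⁻¹ : Module.End Δ V) ?_ ?_, ?_⟩
    · ext v; exact LinearMap.congr_fun b.mul_inv v
    · ext v; exact LinearMap.congr_fun b.inv_mul v
    · intro a v
      have := congrFun (congrArg DFunLike.coe (hb a)) ((b : Module.End Δ V) v)
      simp only [Module.End.mul_apply] at this
      have hbv : (↑b⁻¹ : Module.End Δ V) ((b : Module.End Δ V) v) = v := by
        exact LinearMap.congr_fun b.inv_mul v
      rw [hbv] at this
      simpa [LinearEquiv.ofLinear] using this.symm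
  · rintro ⟨g, hg⟩
    refine ⟨⟨g.toLinearMap, g.symm.toLinearMap, ?_, ?_⟩, ?_⟩
    · ext v; simp [Module.End.mul_apply]
    · ext v; simp [Module.End.mul_apply]
    · intro a
      ext v
      simp only [Module.End.mul_apply]
      have := hg a (g.symm v)
      simp only [LinearEquiv.apply_symm_apply] at this
      simpa using this.symm
end

section
/- Let R be a commutative local Artinian algebra over a field with residue field Z and maximal ideal m satisfying dim_Z(m/m²) ≥ 2. Then R admits a quotient ring isomorphic to Z[X_1,X_2]/(X_1², X_1X_2, X_2²). -/
/-!
Write `A = R ⧸ m²` and `K = R ⧸ m`. The kernel of `A → K` squares to zero, so once this map has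
a ring-theoretic section `s`, the map `x ↦ x - s(x̄)` is a derivation `d : R → m/m²` that is the
canonical projection on `m`. Composing `d` with a surjection `m/m² → K²` and adding the residue
map gives a ring homomorphism `R → K[X₀, X₁]/(X₀, X₁)²`, which is onto because it hits the
constants and both variables.

The section exists by a coefficient-field argument. In characteristic `0`, `K/F` is algebraic
and separable, hence formally étale. In characteristic `p`, take a subring `S ⊆ A` maximal among
those containing all `p`-th powers and meeting the kernel trivially. The image of `S` in `K` is a
field containing `Kᵖ`; if it missed some `z`, then `z` would have degree `p` over it, and adjoining
to `S` any lift `r` of `z` (with `rᵖ ∈ S`) would keep the kernel trivial.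
-/

open IsLocalRing

theorem Ideal.mul_eq_zero_of_sq_eq_bot {A : Type*} [CommRing A] {I : Ideal A} (hI : I ^ 2 = ⊥)
    {a b : A} (ha : a ∈ I) (hb : b ∈ I) : a * b = 0 := by
  have := Ideal.mul_mem_mul ha hb
  rwa [← pow_two, hI, Ideal.mem_bot] at this

theorem Subring.inv_mem_of_forall_pow_mem {K : Type*} [Field K] (D : Subring K) (n : ℕ)
    (hD : ∀ y : K, y ^ (n + 1) ∈ D) {x : K} (hx : x ∈ D) : x⁻¹ ∈ D := by
  have hinv : x⁻¹ = x ^ n * x⁻¹ ^ (n + 1) := by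
    rcases eq_or_ne x 0 with rfl | hx0
    · simp
    · rw [pow_succ, ← mul_assoc, ← mul_pow, mul_inv_cancel₀ hx0, one_pow, one_mul]
  rw [hinv]
  exact D.mul_mem (D.pow_mem hx n) (hD _)

section CharP

open Polynomial

theorem minpoly_eq_X_pow_sub_C_of_pow_mem {K : Type*} [Field K] {p : ℕ} [hp : Fact p.Prime]
    [CharP K p] (K' : Subfield K) {z : K} (hz : z ∉ K') (hzp : z ^ p ∈ K') :
    minpoly K' z = X ^ p - C ⟨z ^ p, hzp⟩ := by
  have hirr : Irreducible (X ^ p - C (⟨z ^ p, hzp⟩ : K')) := by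
    refine X_pow_sub_C_irreducible_of_prime hp.out fun b hb => hz ?_
    have : (b : K) ^ p = z ^ p := congrArg Subtype.val hb
    exact frobenius_inj K p this ▸ b.2
  refine (minpoly.eq_of_irreducible_of_monic hirr ?_ (monic_X_pow_sub_C _ hp.out.ne_zero)).symm
  rw [map_sub, map_pow, aeval_X, aeval_C, sub_eq_zero]
  rfl

variable {A K : Type*} [CommRing A] [Field K]

theorem frobenius_range_ker_eq_zero {p : ℕ} [hp : Fact p.Prime] [CharP A p] (π : A →+* K)
    (hI : RingHom.ker π ^ 2 = ⊥) : ∀ x ∈ (frobenius A p).range, π x = 0 → x = 0 := by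
  rintro _ ⟨a, rfl⟩ ha
  rw [frobenius_def, map_pow, pow_eq_zero_iff hp.out.ne_zero] at ha
  exact pow_eq_zero_of_le hp.out.two_le
    (by rw [pow_two]; exact Ideal.mul_eq_zero_of_sq_eq_bot hI ha ha)

theorem adjoin_ker_eq_zero {p : ℕ} [hp : Fact p.Prime] [CharP A p] [CharP K p] (π : A →+* K)
    (hπ : Function.Surjective π) (S : Subring A) (hpS : (frobenius A p).range ≤ S)
    (hS : ∀ x ∈ S, π x = 0 → x = 0) {r : A} (hr : π r ∉ S.map π) :
    ∀ x ∈ (Algebra.adjoin S {r}).toSubring, π x = 0 → x = 0 := by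
  have : Nontrivial A := π.domain_nontrivial
  have hpow (a : A) : a ^ p ∈ S := hpS ⟨a, rfl⟩
  let K' : Subfield K := (S.map π).toSubfield fun x hx =>
    (S.map π).inv_mem_of_forall_pow_mem (p - 1) (fun y => by
      obtain ⟨a, rfl⟩ := hπ y
      rw [Nat.sub_add_cancel hp.out.one_le]
      exact ⟨a ^ p, hpow a, map_pow π a p⟩) hx
  let πS : S →+* K' := (π.comp S.subtype).codRestrict K' fun x => ⟨x, x.2, rfl⟩
  have hπS : Function.Injective πS := (injective_iff_map_eq_zero πS).mpr fun x hx =>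
    Subtype.ext (hS x x.2 (congrArg Subtype.val hx))
  have hmin : minpoly K' (π r) = X ^ p - C ⟨π r ^ p, ⟨r ^ p, hpow r, map_pow π r p⟩⟩ :=
    minpoly_eq_X_pow_sub_C_of_pow_mem K' hr _
  have haeval (q : S[X]) : π (aeval r q) = aeval (π r) (q.map πS) := by
    rw [aeval_def, aeval_def, eval₂_map, hom_eval₂]
    rfl
  intro x hx hπx
  rw [Subalgebra.mem_toSubring, Algebra.adjoin_singleton_eq_range_aeval] at hx
  obtain ⟨q, rfl⟩ := hx
  change π (aeval r q) = 0 at hπx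
  change aeval r q = 0
  set g : S[X] := X ^ p - C ⟨r ^ p, hpow r⟩
  have hg : g.Monic := monic_X_pow_sub_C _ hp.out.ne_zero
  have hgr : aeval r g = 0 := by
    simp only [g, map_sub, map_pow, aeval_X, aeval_C, sub_eq_zero]
    rfl
  have hmod : aeval r (q %ₘ g) = aeval r q := by
    conv_rhs => rw [← modByMonic_add_div q g]
    rw [map_add, map_mul, hgr, zero_mul, add_zero]
  rw [← hmod] at hπx ⊢
  have hdeg : (q %ₘ g).degree < p := by
    simpa only [g, degree_X_pow_sub_C hp.out.pos] using degree_modByMonic_lt q hg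
  by_contra hne
  have hmap : (q %ₘ g).map πS ≠ 0 :=
    (Polynomial.map_ne_zero_iff hπS).mpr fun h => hne (by rw [h, map_zero])
  have hle := minpoly.degree_le_of_ne_zero K' (π r) hmap (by rw [← haeval]; exact hπx)
  rw [hmin, degree_X_pow_sub_C hp.out.pos, degree_map_eq_of_injective hπS] at hle
  exact hle.not_gt hdeg

theorem exists_ringHom_section_of_charP (p : ℕ) [hp : Fact p.Prime] [CharP A p]
    (π : A →+* K) (hπ : Function.Surjective π) (hI : RingHom.ker π ^ 2 = ⊥) :
    ∃ s : K →+* A, π.comp s = RingHom.id K := by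
  have : CharP K p := (CharP.charP_iff_prime_eq_zero hp.out).mpr
    (by rw [← map_natCast π, CharP.cast_eq_zero, map_zero])
  obtain ⟨S, -, hS⟩ := zorn_le_nonempty₀
    {S : Subring A | (frobenius A p).range ≤ S ∧ ∀ x ∈ S, π x = 0 → x = 0}
    (fun c hc hchain T hT => by
      refine ⟨sSup c, ⟨(hc hT).1.trans (le_sSup hT), fun x hx => ?_⟩, fun _ => le_sSup⟩
      obtain ⟨U, hU, hxU⟩ := (Subring.mem_sSup_of_directedOn ⟨T, hT⟩ hchain.directedOn).mp hx
      exact (hc hU).2 x hxU)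
    _ ⟨le_rfl, frobenius_range_ker_eq_zero π hI⟩
  have hinj : Function.Injective (π.comp S.subtype) :=
    (injective_iff_map_eq_zero _).mpr fun x hx => Subtype.ext (hS.prop.2 x x.2 hx)
  have hsurj : Function.Surjective (π.comp S.subtype) := by
    intro z
    obtain ⟨r, rfl⟩ := hπ z
    by_contra hz
    have hr : π r ∉ S.map π := fun ⟨x, hx, hxr⟩ => hz ⟨⟨x, hx⟩, hxr⟩
    have hle : S ≤ (Algebra.adjoin S {r}).toSubring := fun x hx =>
      Subalgebra.algebraMap_mem _ (⟨x, hx⟩ : S)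
    have hmax := hS.le_of_ge
      ⟨hS.prop.1.trans hle, adjoin_ker_eq_zero π hπ S hS.prop.1 hS.prop.2 hr⟩ hle
    exact hr ⟨r, hmax (Algebra.self_mem_adjoin_singleton S r), rfl⟩
  let e := RingEquiv.ofBijective _ ⟨hinj, hsurj⟩
  exact ⟨S.subtype.comp e.symm.toRingHom, RingHom.ext e.apply_symm_apply⟩

end CharP

theorem exists_ringHom_section {F A K : Type*} [Field F] [CommRing A] [Field K] [Algebra F A]
    [Algebra F K] [Algebra.IsAlgebraic F K] (π : A →ₐ[F] K) (hπ : Function.Surjective π)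
    (hI : RingHom.ker π ^ 2 = ⊥) : ∃ s : K →+* A, (π : A →+* K).comp s = RingHom.id K := by
  have : Nontrivial A := (π : A →+* K).domain_nontrivial
  obtain ⟨p, _⟩ := CharP.exists F
  rcases CharP.char_is_prime_or_zero F p with hp | rfl
  · have : Fact p.Prime := ⟨hp⟩
    have : CharP A p := charP_of_injective_algebraMap (algebraMap F A).injective p
    exact exists_ringHom_section_of_charP p (π : A →+* K) hπ hI
  · have : CharZero F := CharP.charP_to_charZero F
    have : Algebra.FormallyEtale F K := .of_isSeparable F K
    exact ⟨_, congrArg AlgHom.toRingHom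
      (Algebra.FormallySmooth.comp_liftOfSurjective (AlgHom.id F K) π hπ ⟨2, hI⟩)⟩

theorem Ideal.exists_derivation_toCotangent {R : Type*} [CommRing R] (I : Ideal R)
    (s : R ⧸ I →+* R ⧸ I ^ 2)
    (hs : (Ideal.Quotient.factor (I.pow_le_self two_ne_zero)).comp s = RingHom.id _) :
    ∃ d : Derivation ℤ R I.Cotangent, (∀ x : I, d x = I.toCotangent x) ∧
      ∀ a : R ⧸ I, ∃ x, Ideal.Quotient.mk I x = a ∧ d x = 0 := by
  have hlift (x : R) : ∃ y, Ideal.Quotient.mk (I ^ 2) y = s (Ideal.Quotient.mk I x) ∧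
      Ideal.Quotient.mk I y = Ideal.Quotient.mk I x := by
    obtain ⟨y, hy⟩ := Ideal.Quotient.mk_surjective (s (Ideal.Quotient.mk I x))
    refine ⟨y, hy, ?_⟩
    simpa only [RingHom.comp_apply, ← hy, Ideal.Quotient.factor_mk, RingHom.id_apply]
      using RingHom.congr_fun hs (Ideal.Quotient.mk I x)
  have hmem (x : R) :
      s (Ideal.Quotient.mk I x) - Ideal.Quotient.mk (I ^ 2) x ∈ I.cotangentIdeal := by
    obtain ⟨y, hy, hyx⟩ := hlift x
    rw [← hy, ← map_sub]
    exact ⟨_, Ideal.Quotient.eq.mp hyx, rfl⟩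
  let f : R →ₐ[ℤ] R ⧸ I ^ 2 := (s.comp (Ideal.Quotient.mk I)).toIntAlgHom
  have hf : (Ideal.Quotient.mkₐ ℤ I.cotangentIdeal).comp f =
      IsScalarTower.toAlgHom ℤ R ((R ⧸ I ^ 2) ⧸ I.cotangentIdeal) := by
    ext x
    exact Ideal.Quotient.eq.mpr (hmem x)
  let d₀ := derivationToSquareZeroOfLift I.cotangentIdeal I.cotangentIdeal_square f hf
  have hd₀ (x : R) : (d₀ x : R ⧸ I ^ 2) = s (Ideal.Quotient.mk I x) - Ideal.Quotient.mk _ x :=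
    derivationToSquareZeroOfLift_apply _ _ f hf x
  -- `d₀` is `x ↦ s x̄ - x`, hence the sign.
  refine ⟨-(I.cotangentEquivIdeal.symm.toLinearMap.compDer d₀), fun x => ?_, fun a => ?_⟩
  · change -(I.cotangentEquivIdeal.symm (d₀ x)) = _
    rw [neg_eq_iff_eq_neg, LinearEquiv.symm_apply_eq, map_neg]
    ext
    simp [hd₀, Ideal.Quotient.eq_zero_iff_mem.mpr x.2]
  · obtain ⟨x, rfl⟩ := Ideal.Quotient.mk_surjective a
    obtain ⟨y, hy, hyx⟩ := hlift x
    refine ⟨y, hyx, ?_⟩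
    change -(I.cotangentEquivIdeal.symm (d₀ y)) = 0
    rw [neg_eq_zero, LinearEquiv.map_eq_zero_iff]
    ext
    simp [hd₀, hy, hyx]

theorem IsLocalRing.exists_derivation_toCotangent (F R : Type*) [Field F] [CommRing R]
    [Algebra F R] [IsLocalRing R] [Algebra.IsAlgebraic F (ResidueField R)] :
    ∃ d : Derivation ℤ R (CotangentSpace R),
      (∀ x : maximalIdeal R, d x = (maximalIdeal R).toCotangent x) ∧
      ∀ a : ResidueField R, ∃ x, residue R x = a ∧ d x = 0 := by
  have hm2 : maximalIdeal R ^ 2 ≤ maximalIdeal R := (maximalIdeal R).pow_le_self two_ne_zero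
  let π : R ⧸ maximalIdeal R ^ 2 →ₐ[F] ResidueField R := Ideal.Quotient.factorₐ F hm2
  have hker : RingHom.ker π ^ 2 = ⊥ := by
    change RingHom.ker (Ideal.Quotient.factor hm2) ^ 2 = ⊥
    rw [Ideal.Quotient.factor_ker, ← Ideal.map_pow, Ideal.map_quotient_self]
  obtain ⟨s, hs⟩ :=
    exists_ringHom_section π (fun x => Ideal.Quotient.factor_surjective hm2 x) hker
  exact (maximalIdeal R).exists_derivation_toCotangent s hs

def RingHom.addDerivation {R B M : Type*} [CommRing R] [CommRing B] [AddCommGroup M]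
    [Module R M] (ρ : R →+* B) (d : Derivation ℤ R M) (ℓ : M →+ B)
    (hℓ : ∀ (x : R) (m : M), ℓ (x • m) = ρ x * ℓ m) (hsq : ∀ m n : M, ℓ m * ℓ n = 0) :
    R →+* B where
  toFun x := ρ x + ℓ (d x)
  map_one' := by simp
  map_mul' x y := by
    simp only [map_mul, Derivation.leibniz, map_add, hℓ]
    linear_combination -hsq (d x) (d y)
  map_zero' := by simp
  map_add' x y := by simp only [map_add]; ring

theorem exists_linearMap_surjective_of_le_finrank {K V : Type*} [DivisionRing K]
    [AddCommGroup V] [Module K V] [Module.Finite K V] {n : ℕ} (hn : n ≤ Module.finrank K V) :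
    ∃ φ : V →ₗ[K] (Fin n → K), Function.Surjective φ :=
  ⟨(LinearMap.funLeft K K (Fin.castLE hn)).comp (Module.finBasis K V).equivFun.toLinearMap,
    (LinearMap.funLeft_surjective_of_injective K K _ (Fin.castLE_injective hn)).comp
      (Module.finBasis K V).equivFun.surjective⟩

section QuadraticMonomials

open MvPolynomial

noncomputable abbrev quadraticMonomialsIdeal (K : Type*) [CommRing K] :
    Ideal (MvPolynomial (Fin 2) K) :=
  Ideal.span {X 0 * X 0, X 0 * X 1, X 1 * X 1}

theorem mk_linearCombination_mul_eq_zero {K : Type*} [CommRing K] (u v : Fin 2 → K) :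
    Ideal.Quotient.mk (quadraticMonomialsIdeal K) (Fintype.linearCombination K X u) *
      Ideal.Quotient.mk (quadraticMonomialsIdeal K) (Fintype.linearCombination K X v) = 0 := by
  have h00 : Ideal.Quotient.mk (quadraticMonomialsIdeal K) (X 0 * X 0) = 0 :=
    Ideal.Quotient.eq_zero_iff_mem.mpr (Ideal.subset_span (by simp))
  have h01 : Ideal.Quotient.mk (quadraticMonomialsIdeal K) (X 0 * X 1) = 0 :=
    Ideal.Quotient.eq_zero_iff_mem.mpr (Ideal.subset_span (by simp))
  have h11 : Ideal.Quotient.mk (quadraticMonomialsIdeal K) (X 1 * X 1) = 0 :=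
    Ideal.Quotient.eq_zero_iff_mem.mpr (Ideal.subset_span (by simp))
  simp only [Fintype.linearCombination_apply, Fin.sum_univ_two, smul_eq_C_mul, map_add,
    map_mul] at h00 h01 h11 ⊢
  set c := fun a => Ideal.Quotient.mk (quadraticMonomialsIdeal K) (C a)
  linear_combination c (u 0) * c (v 0) * h00 + (c (u 0) * c (v 1) + c (u 1) * c (v 0)) * h01 +
    c (u 1) * c (v 1) * h11

theorem surjective_of_mk_C_mem_range_of_mk_X_mem_range {σ K B : Type*} [CommRing K]
    [CommRing B] {J : Ideal (MvPolynomial σ K)} (f : B →+* MvPolynomial σ K ⧸ J)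
    (hC : ∀ a, Ideal.Quotient.mk J (C a) ∈ f.range)
    (hX : ∀ i, Ideal.Quotient.mk J (X i) ∈ f.range) : Function.Surjective f := by
  suffices h : ∀ P, Ideal.Quotient.mk J P ∈ f.range from fun t =>
    (Ideal.Quotient.mk_surjective t).elim fun P hP => hP ▸ h P
  intro P
  induction P using MvPolynomial.induction_on with
  | C a => exact hC a
  | add P Q hP hQ => simpa only [map_add] using f.range.add_mem hP hQ
  | mul_X P i hP => simpa only [map_mul] using f.range.mul_mem hP (hX i)

end QuadraticMonomials

theorem IsLocalRing.exists_surjective_quotient_quadraticMonomialsIdeal {R : Type*}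
    [CommRing R] [IsLocalRing R] (d : Derivation ℤ R (CotangentSpace R))
    (hd_mem : ∀ x : maximalIdeal R, d x = (maximalIdeal R).toCotangent x)
    (hd_lift : ∀ a : ResidueField R, ∃ x, residue R x = a ∧ d x = 0)
    (hdim : 2 ≤ Module.finrank (ResidueField R) (CotangentSpace R)) :
    ∃ f : R →+* MvPolynomial (Fin 2) (ResidueField R) ⧸ quadraticMonomialsIdeal (ResidueField R),
      Function.Surjective f := by
  have : Module.Finite (ResidueField R) (CotangentSpace R) :=
    Module.finite_of_finrank_pos (by omega)
  obtain ⟨φ, hφ⟩ := exists_linearMap_surjective_of_le_finrank hdim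
  let ℓ := (Ideal.Quotient.mkₐ _ (quadraticMonomialsIdeal (ResidueField R))).toLinearMap ∘ₗ
    Fintype.linearCombination _ MvPolynomial.X ∘ₗ φ
  let ρ : R →+* MvPolynomial (Fin 2) (ResidueField R) ⧸ quadraticMonomialsIdeal _ :=
    (algebraMap (ResidueField R) _).comp (residue R)
  have hℓ (x : R) (v : CotangentSpace R) : ℓ (x • v) = ρ x * ℓ v := by
    rw [← algebraMap_smul (ResidueField R) x v, map_smul]
    exact Algebra.smul_def (residue R x) (ℓ v)
  refine ⟨_, surjective_of_mk_C_mem_range_of_mk_X_mem_range (ρ.addDerivation d ℓ.toAddMonoidHom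
    hℓ fun v w => mk_linearCombination_mul_eq_zero (φ v) (φ w)) (fun a => ?_) (fun i => ?_)⟩
  · obtain ⟨x, rfl, hx⟩ := hd_lift a
    refine ⟨x, ?_⟩
    show ρ x + ℓ (d x) = _
    rw [hx, map_zero, add_zero]
    rfl
  · obtain ⟨v, hv⟩ := hφ (Pi.single i 1)
    obtain ⟨x, rfl⟩ := (maximalIdeal R).toCotangent_surjective v
    refine ⟨x, ?_⟩
    show ρ x + ℓ (d x) = _
    simp [ρ, ℓ, hd_mem, hv, (residue_eq_zero_iff _).mpr x.2]

/-- **A small quotient of a local Artinian ring with fat cotangent space.**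
Let `R` be a finite-dimensional commutative local algebra over a field `F` with residue
field `Z` and maximal ideal `m` satisfying `dim_Z(m/m²) ≥ 2`.  Then `R` has a quotient ring
isomorphic to `Z[X₁,X₂]/(X₁², X₁X₂, X₂²)`, i.e. there is a surjective ring homomorphism
from `R` onto that ring. -/
theorem exists_small_quotient
    (F R : Type*) [Field F] [CommRing R] [Algebra F R] [FiniteDimensional F R]
    [IsLocalRing R]
    (hdim : 2 ≤ Module.finrank (IsLocalRing.ResidueField R) (IsLocalRing.CotangentSpace R)) :
    ∃ f : R →+* (MvPolynomial (Fin 2) (IsLocalRing.ResidueField R) ⧸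
        Ideal.span {(MvPolynomial.X 0 * MvPolynomial.X 0 :
            MvPolynomial (Fin 2) (IsLocalRing.ResidueField R)),
          MvPolynomial.X 0 * MvPolynomial.X 1, MvPolynomial.X 1 * MvPolynomial.X 1}),
      Function.Surjective f := by
  obtain ⟨d, hd_mem, hd_lift⟩ := IsLocalRing.exists_derivation_toCotangent F R
  exact IsLocalRing.exists_surjective_quotient_quadraticMonomialsIdeal d hd_mem hd_lift hdim
end
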